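/- With f and g as in the first-order rogue wave ansatz (a₁ = 0), the pair (f, g) satisfies the second bilinear equation (i·D_t + D_x² + i·v·D_x³ + 6·i·v·D_x) g·f = 0. -/

import Mathlib

open Complex

noncomputable def dx (φ : ℝ → ℝ → ℂ) : ℝ → ℝ → ℂ := fun x t => deriv (fun y => φ y t) x
noncomputable def dt (φ : ℝ → ℝ → ℂ) : ℝ → ℝ → ℂ := fun x t => deriv (fun s => φ x s) t

noncomputable def fτ (v : ℝ) : ℝ → ℝ → ℂ := fun x t =>
  (1/2) * ((x : ℂ) + (2*I - 6*v)*t - 1/2) * ((x : ℂ) - (6*v + 2*I)*t - 1/2) + 1/8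

noncomputable def gτ (v : ℝ) : ℝ → ℝ → ℂ := fun x t =>
  (1/2) * ((x : ℂ) + (2*I - 6*v)*t + 1/2) * ((x : ℂ) - (6*v + 2*I)*t - 3/2) + 1/8

/-!
Both `f` and `g` are of the form `½ (x + α t + p)(x + β t + q) + c` with the same `α, β`, so their
derivatives are explicit: `f_x = g_x = x − 6vt − ½`, `f_xx = g_xx = 1` and the third `x`-derivatives
vanish. After substitution the bilinear expression is a polynomial in `x, t, v, i` that is a
multiple of `i² + 1`.
-/

section AffineProducts

variable (a b c d e : ℂ) (x : ℝ)

lemma hasDerivAt_ofReal_affine : HasDerivAt (fun y : ℝ => a * y + b) a x := by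
  simpa using ((hasDerivAt_id x).ofReal_comp.const_mul a).add_const b

lemma hasDerivAt_half_mul_affine :
    HasDerivAt (fun y : ℝ => 1/2 * (a * y + b) * (c * y + d) + e)
      (1/2 * (a * (c * x + d) + (a * x + b) * c)) x := by
  have h := (((hasDerivAt_ofReal_affine a b x).const_mul (1/2)).mul
    (hasDerivAt_ofReal_affine c d x)).add_const e
  exact h.congr_deriv (by ring)

end AffineProducts

noncomputable def halfLineProduct (α β p q c : ℂ) : ℝ → ℝ → ℂ := fun x t =>
  1/2 * (x + α * t + p) * (x + β * t + q) + c

section HalfLineProduct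

variable (α β p q c : ℂ) (x t : ℝ)

lemma dx_halfLineProduct :
    dx (halfLineProduct α β p q c) x t = x + (α + β) / 2 * t + (p + q) / 2 := by
  have h := hasDerivAt_half_mul_affine 1 (α * t + p) 1 (β * t + q) c x
  simp only [one_mul, ← add_assoc] at h
  simp only [dx, halfLineProduct, h.deriv]
  ring

lemma dt_halfLineProduct :
    dt (halfLineProduct α β p q c) x t =
      1/2 * (α * (x + β * t + q) + β * (x + α * t + p)) := by
  have hfun : (fun s : ℝ => halfLineProduct α β p q c x s) =
      fun s : ℝ => 1/2 * (α * s + (x + p)) * (β * s + (x + q)) + c := by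
    ext s; simp only [halfLineProduct]; ring
  rw [dt, hfun, (hasDerivAt_half_mul_affine α (x + p) β (x + q) c t).deriv]
  ring

lemma dx_dx_halfLineProduct : dx (dx (halfLineProduct α β p q c)) x t = 1 := by
  have h := hasDerivAt_ofReal_affine 1 ((α + β) / 2 * t + (p + q) / 2) x
  simp only [one_mul, ← add_assoc] at h
  rw [dx]
  simp only [dx_halfLineProduct, h.deriv]

lemma dx_dx_dx_halfLineProduct : dx (dx (dx (halfLineProduct α β p q c))) x t = 0 := by
  rw [dx]
  simp only [dx_dx_halfLineProduct, deriv_const']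

end HalfLineProduct

lemma fτ_eq_halfLineProduct (v : ℝ) :
    fτ v = halfLineProduct (2*I - 6*v) (-(6*v + 2*I)) (-1/2) (-1/2) (1/8) := by
  ext x t; simp only [fτ, halfLineProduct]; ring

lemma gτ_eq_halfLineProduct (v : ℝ) :
    gτ v = halfLineProduct (2*I - 6*v) (-(6*v + 2*I)) (1/2) (-3/2) (1/8) := by
  ext x t; simp only [gτ, halfLineProduct]; ring

/-- `(f, g)` satisfies the second bilinear equation
`(i D_t + D_x² + i v D_x³ + 6 i v D_x) g·f = 0`. -/
theorem second_bilinear_equation (v : ℝ) :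
    ∀ x t : ℝ,
      I * (dt (gτ v) x t * fτ v x t - gτ v x t * dt (fτ v) x t)
      + (dx (dx (gτ v)) x t * fτ v x t - 2 * dx (gτ v) x t * dx (fτ v) x t
          + gτ v x t * dx (dx (fτ v)) x t)
      + I * v * (dx (dx (dx (gτ v))) x t * fτ v x t
          - 3 * dx (dx (gτ v)) x t * dx (fτ v) x t
          + 3 * dx (gτ v) x t * dx (dx (fτ v)) x t
          - gτ v x t * dx (dx (dx (fτ v))) x t)
      + 6 * I * v * (dx (gτ v) x t * fτ v x t - gτ v x t * dx (fτ v) x t) = 0 := by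
  intro x t
  rw [fτ_eq_halfLineProduct, gτ_eq_halfLineProduct]
  simp only [dx_dx_dx_halfLineProduct, dx_dx_halfLineProduct, dx_halfLineProduct,
    dt_halfLineProduct, halfLineProduct]
  linear_combination (-4 * (t : ℂ) ^ 2 * I ^ 2 - 2 * t * I - 1/2 + x - x ^ 2
    + 12 * v * x * t - 6 * v * t - 36 * v ^ 2 * t ^ 2) * I_sq
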